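/- Let e be a Hermite–Biehler function having no real zeros, and assume the de Branges space B(e) contains a nonzero element. Then for every β ∈ [0, π), all zeros of the entire function s_β are real and simple; that is, if s_β(w) = 0 for some w ∈ ℂ, then w ∈ ℝ and s_β'(w) ≠ 0. -/

import Mathlib

/-!
Put `Θ = e# / e`. Since `e` is Hermite–Biehler, `‖Θ‖ < 1` on the upper half-plane. A zero `w`
of `s_β` satisfies `‖e# w‖ = ‖e w‖`, which forces `w` to be real; there `e w ≠ 0`, so `Θ` is
analytic near `w` and `‖Θ w‖ = 1`. At a double zero the Wronskian `e#' e - e# e'` vanishes,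
i.e. `Θ' w = 0`. But near a critical point `Θ z = Θ w + (z - w) ^ n g z` with `n ≥ 2` and
`g w ≠ 0`, and for `n ≥ 2` the `n`-th powers of the directions into the upper half-plane
cover every direction but one, so along a suitable ray into the upper half-plane the term
`(z - w) ^ n g z` points away from `Θ w` and `‖Θ‖ ≥ 1`.
-/

open MeasureTheory Complex

noncomputable section

/-- `f#(z) := conj (f (conj z))`. -/
def fsharp (f : ℂ → ℂ) : ℂ → ℂ := fun z => (starRingEnd ℂ) (f ((starRingEnd ℂ) z))

/-- Hermite–Biehler function: entire with `|e(conj z)| < |e z|` on the upper half-plane. -/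
def IsHB (e : ℂ → ℂ) : Prop :=
  Differentiable ℂ e ∧
  ∀ z : ℂ, 0 < z.im → ‖e ((starRingEnd ℂ) z)‖ < ‖e z‖

/-- Membership in the de Branges space `B(e)`. -/
def MemDB (e f : ℂ → ℂ) : Prop :=
  Differentiable ℂ f ∧
  Integrable (fun x : ℝ => ‖f x / e x‖ ^ 2) ∧
  ∃ c : ℝ, 0 ≤ c ∧ ∀ z : ℂ, 0 < z.im →
    ‖f z / e z‖ ≤ c / Real.sqrt z.im ∧
    ‖fsharp f z / e z‖ ≤ c / Real.sqrt z.im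

/-- Squared norm in `B(e)`: `∫ |f(x)|² |e(x)|⁻² dx`. -/
def dBnormSq (e f : ℂ → ℂ) : ℝ :=
  ∫ x : ℝ, ‖f x‖ ^ 2 / ‖e x‖ ^ 2

/-- Inner product in `B(e)`: `∫ conj (f x) * g x * |e x|⁻² dx`. -/
def dBinner (e f g : ℂ → ℂ) : ℂ :=
  ∫ x : ℝ, (starRingEnd ℂ) (f x) * g x / ((‖e x‖ : ℂ)) ^ 2

/-- The reproducing kernel of `B(e)`. -/
def dBkernel (e : ℂ → ℂ) (z w : ℂ) : ℂ :=
  if z = (starRingEnd ℂ) w then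
    (deriv (fsharp e) z * e z - deriv e z * fsharp e z) / (2 * Real.pi * Complex.I)
  else
    (fsharp e z * e ((starRingEnd ℂ) w) - e z * fsharp e ((starRingEnd ℂ) w)) /
      (2 * Real.pi * Complex.I * (z - (starRingEnd ℂ) w))

/-- `s_β(z) := (i/2) (e^{iβ} e(z) − e^{−iβ} e#(z))`. -/
def sfun (e : ℂ → ℂ) (β : ℝ) (z : ℂ) : ℂ :=
  Complex.I / 2 *
    (Complex.exp (Complex.I * β) * e z - Complex.exp (-(Complex.I * β)) * fsharp e z)

end

open Filter Topology ComplexConjugate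

theorem norm_le_norm_add_of_re_inner_nonneg {E : Type*} [NormedAddCommGroup E]
    [InnerProductSpace ℂ E] {x y : E} (h : 0 ≤ RCLike.re (inner ℂ x y)) :
    ‖x‖ ≤ ‖x + y‖ := by
  have hsq : ‖x‖ ^ 2 ≤ ‖x + y‖ ^ 2 := by
    rw [norm_add_sq (𝕜 := ℂ)]
    nlinarith [sq_nonneg ‖y‖]
  exact pow_le_pow_iff_left₀ (norm_nonneg _) (norm_nonneg _) two_ne_zero |>.1 hsq

theorem exists_re_mul_exp_pos {c : ℂ} (hc : c ≠ 0) :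
    ∃ φ : ℝ, 0 < φ ∧ φ < 2 * Real.pi ∧ 0 < (c * Complex.exp (φ * Complex.I)).re := by
  have hre : ∀ φ : ℝ, (c * Complex.exp (φ * Complex.I)).re = ‖c‖ * Real.cos (c.arg + φ) := by
    intro φ
    conv_lhs => rw [← Complex.norm_mul_exp_arg_mul_I c, mul_assoc, ← Complex.exp_add,
      ← add_mul, ← Complex.ofReal_add, Complex.re_ofReal_mul, Complex.exp_ofReal_mul_I_re]
  have hc' : 0 < ‖c‖ := norm_pos_iff.2 hc
  have harg_gt := Complex.neg_pi_lt_arg c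
  have harg_le := Complex.arg_le_pi c
  have hπ := Real.pi_pos
  by_cases harg : 0 < c.arg
  · refine ⟨2 * Real.pi - c.arg, by linarith, by linarith, ?_⟩
    rw [hre, add_sub_cancel, Real.cos_two_pi, mul_one]
    exact hc'
  · refine ⟨Real.pi / 4 - c.arg, by linarith, by linarith, ?_⟩
    rw [hre, add_sub_cancel, Real.cos_pi_div_four]
    positivity

theorem exists_im_pos_re_mul_pow_pos {c : ℂ} (hc : c ≠ 0) {n : ℕ} (hn : 2 ≤ n) :
    ∃ u : ℂ, 0 < u.im ∧ 0 < (c * u ^ n).re := by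
  obtain ⟨φ, hφ0, hφ2π, hφ⟩ := exists_re_mul_exp_pos hc
  have hn' : (2 : ℝ) ≤ n := by exact_mod_cast hn
  refine ⟨Complex.exp ((φ / n : ℝ) * Complex.I), ?_, ?_⟩
  · rw [Complex.exp_ofReal_mul_I_im]
    apply Real.sin_pos_of_pos_of_lt_pi (by positivity)
    rw [div_lt_iff₀ (by positivity)]
    nlinarith [Real.pi_pos]
  · rwa [← Complex.exp_nat_mul, ← mul_assoc, Complex.ofReal_div, Complex.ofReal_natCast,
      mul_div_cancel₀ _ (by exact_mod_cast (by omega : n ≠ 0))]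

theorem tendsto_add_ofReal_mul_nhdsGT (w u : ℂ) :
    Tendsto (fun t : ℝ => w + t * u) (𝓝[>] 0) (𝓝 w) := by
  have : Continuous fun t : ℝ => w + t * u := by fun_prop
  simpa using (this.tendsto 0).mono_left nhdsWithin_le_nhds

theorem tendsto_add_ofReal_mul_nhdsWithin_im_gt (w : ℂ) {u : ℂ} (hu : 0 < u.im) :
    Tendsto (fun t : ℝ => w + t * u) (𝓝[>] 0) (𝓝[{z | w.im < z.im}] w) := by
  refine tendsto_nhdsWithin_iff.2 ⟨tendsto_add_ofReal_mul_nhdsGT w u, ?_⟩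
  filter_upwards [self_mem_nhdsWithin] with t (ht : 0 < t)
  simpa using mul_pos ht hu

theorem AnalyticAt.frequently_norm_le_of_deriv_eq_zero {F : ℂ → ℂ} {w : ℂ}
    (hF : AnalyticAt ℂ F w) (hF' : deriv F w = 0) :
    ∃ᶠ z in 𝓝[{z | w.im < z.im}] w, ‖F w‖ ≤ ‖F z‖ := by
  suffices ∃ u : ℂ, 0 < u.im ∧ ∀ᶠ t : ℝ in 𝓝[>] 0, ‖F w‖ ≤ ‖F (w + t * u)‖ by
    obtain ⟨u, hu, h⟩ := this
    exact (tendsto_add_ofReal_mul_nhdsWithin_im_gt w hu).frequently h.frequently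
  have horder : 2 ≤ analyticOrderAt (F · - F w) w := by
    rw [← hF.analyticOrderAt_deriv_add_one]
    have h1 : 1 ≤ analyticOrderAt (deriv F) w :=
      Order.one_le_iff_ne_zero.2 (analyticOrderAt_ne_zero.2 ⟨hF.deriv, hF'⟩)
    exact (add_le_add_left h1 1 : (1 : ℕ∞) + 1 ≤ _)
  cases hn : analyticOrderAt (F · - F w) w with
  | top =>
    have hconst : ∀ᶠ z in 𝓝 w, F z - F w = 0 := analyticOrderAt_eq_top.1 hn
    refine ⟨Complex.I, by simp, ?_⟩
    filter_upwards [(tendsto_add_ofReal_mul_nhdsGT w _).eventually hconst] with t ht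
    rw [sub_eq_zero.1 ht]
  | coe n =>
    obtain ⟨g, hg, hgw, hFg⟩ := (hF.sub analyticAt_const).analyticOrderAt_eq_natCast.1 hn
    rcases eq_or_ne (F w) 0 with hFw | hFw
    · exact ⟨Complex.I, by simp, .of_forall fun t => by simp [hFw]⟩
    obtain ⟨u, hu, hpos⟩ := exists_im_pos_re_mul_pow_pos (mul_ne_zero (star_ne_zero.2 hFw) hgw)
      (by exact_mod_cast hn ▸ horder)
    refine ⟨u, hu, ?_⟩
    have hg_ray : Tendsto (fun t : ℝ => conj (F w) * u ^ n * g (w + t * u)) (𝓝[>] 0)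
        (𝓝 (conj (F w) * g w * u ^ n)) := by
      rw [mul_right_comm]
      exact tendsto_const_nhds.mul
        (hg.continuousAt.tendsto.comp (tendsto_add_ofReal_mul_nhdsGT w u))
    filter_upwards [(tendsto_add_ofReal_mul_nhdsGT w u).eventually hFg,
      (Complex.continuous_re.tendsto _).comp hg_ray |>.eventually (lt_mem_nhds hpos),
      self_mem_nhdsWithin] with t hFt hre (ht : 0 < t)
    have : F (w + t * u) = F w + (t * u) ^ n * g (w + t * u) := by
      simpa [sub_eq_iff_eq_add'] using hFt
    rw [this]
    apply norm_le_norm_add_of_re_inner_nonneg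
    have : inner ℂ (F w) ((t * u) ^ n * g (w + t * u)) =
        (t ^ n : ℝ) * (conj (F w) * u ^ n * g (w + t * u)) := by
      rw [RCLike.inner_apply]; push_cast; ring
    rw [this, RCLike.re_eq_complex_re, Complex.re_ofReal_mul]
    exact mul_nonneg (by positivity) hre.le

theorem norm_fsharp (f : ℂ → ℂ) (z : ℂ) : ‖fsharp f z‖ = ‖f (conj z)‖ :=
  Complex.norm_conj _

theorem deriv_fsharp (f : ℂ → ℂ) : deriv (fsharp f) = fsharp (deriv f) :=
  deriv_conj_conj

theorem Differentiable.fsharp {f : ℂ → ℂ} (hf : Differentiable ℂ f) :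
    Differentiable ℂ (fsharp f) :=
  fun _ => differentiableAt_conj_conj_iff.2 (hf _)

theorem sfun_eq_zero_iff {e : ℂ → ℂ} {β : ℝ} {z : ℂ} :
    sfun e β z = 0 ↔
      Complex.exp (Complex.I * β) * e z = Complex.exp (-(Complex.I * β)) * fsharp e z := by
  simp [sfun, sub_eq_zero, Complex.I_ne_zero]

theorem deriv_sfun {e : ℂ → ℂ} (he : Differentiable ℂ e) (β : ℝ) :
    deriv (sfun e β) = sfun (deriv e) β := by
  ext z
  have hs : HasDerivAt (sfun e β) _ z :=
    (((he z).hasDerivAt.const_mul (Complex.exp (Complex.I * β))).sub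
      ((he.fsharp z).hasDerivAt.const_mul (Complex.exp (-(Complex.I * β))))).const_mul
      (Complex.I / 2)
  rw [hs.deriv, deriv_fsharp, sfun]

theorem norm_fsharp_eq_of_sfun_eq_zero {e : ℂ → ℂ} {β : ℝ} {z : ℂ} (hz : sfun e β z = 0) :
    ‖fsharp e z‖ = ‖e z‖ := by
  simpa [Complex.norm_exp] using (congrArg norm (sfun_eq_zero_iff.1 hz)).symm

theorem deriv_fsharp_div_eq_zero {e : ℂ → ℂ} (he : Differentiable ℂ e) {β : ℝ} {w : ℂ}
    (hew : e w ≠ 0) (hs : sfun e β w = 0) (hs' : sfun (deriv e) β w = 0) :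
    deriv (fun z => fsharp e z / e z) w = 0 := by
  have hΘ : HasDerivAt (fun z => fsharp e z / e z) _ w :=
    (he.fsharp w).hasDerivAt.div (he w).hasDerivAt hew
  rw [hΘ.deriv, deriv_fsharp, div_eq_zero_iff]
  left
  rw [sfun_eq_zero_iff] at hs hs'
  have hc : Complex.exp (-(Complex.I * β)) ≠ 0 := Complex.exp_ne_zero _
  apply (mul_right_injective₀ hc).eq_iff.1
  linear_combination deriv e w * hs - e w * hs'

namespace IsHB

variable {e : ℂ → ℂ}

theorem norm_fsharp_lt (he : IsHB e) {z : ℂ} (hz : 0 < z.im) : ‖fsharp e z‖ < ‖e z‖ := by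
  simpa [norm_fsharp] using he.2 z hz

theorem norm_fsharp_div_lt_one (he : IsHB e) {z : ℂ} (hz : 0 < z.im) :
    ‖fsharp e z / e z‖ < 1 := by
  have h := he.norm_fsharp_lt hz
  rw [norm_div, div_lt_one ((norm_nonneg _).trans_lt h)]
  exact h

theorem im_eq_zero_of_norm_fsharp_eq (he : IsHB e) {w : ℂ} (hw : ‖fsharp e w‖ = ‖e w‖) :
    w.im = 0 := by
  rcases lt_trichotomy w.im 0 with h | h | h
  · have := he.norm_fsharp_lt (z := conj w) (by simpa using h)
    rw [norm_fsharp, Complex.conj_conj, ← hw, norm_fsharp] at this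
    exact absurd this (lt_irrefl _)
  · exact h
  · exact absurd hw (he.norm_fsharp_lt h).ne

end IsHB

theorem statement7_general (e : ℂ → ℂ) (he : IsHB e) (hreal : ∀ x : ℝ, e x ≠ 0)
    (β : ℝ)
    (w : ℂ) (hw : sfun e β w = 0) :
    w.im = 0 ∧ deriv (sfun e β) w ≠ 0 := by
  have hw_norm := norm_fsharp_eq_of_sfun_eq_zero hw
  have hw_real := he.im_eq_zero_of_norm_fsharp_eq hw_norm
  refine ⟨hw_real, fun hw' => ?_⟩
  have hew : e w ≠ 0 := by
    rw [← Complex.re_add_im w, hw_real]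
    simpa using hreal w.re
  set Θ : ℂ → ℂ := fun z => fsharp e z / e z
  have hΘw : ‖Θ w‖ = 1 := by simp [Θ, hw_norm, hew]
  have hΘ' : deriv Θ w = 0 :=
    deriv_fsharp_div_eq_zero he.1 hew hw (by rwa [deriv_sfun he.1] at hw')
  have hΘ : AnalyticAt ℂ Θ w := (he.1.fsharp.analyticAt w).div (he.1.analyticAt w) hew
  obtain ⟨z, hz, hzw⟩ :=
    (frequently_nhdsWithin_iff.1 (hΘ.frequently_norm_le_of_deriv_eq_zero hΘ')).exists
  have := he.norm_fsharp_div_lt_one (show 0 < z.im by simpa [hw_real] using hzw)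
  simp only [Θ] at hz hΘw
  linarith

/-- If the HB function `e` has no real zeros and `B(e)` contains a nonzero
element, then all zeros of `s_β` are real and simple. -/
theorem statement7 (e : ℂ → ℂ) (he : IsHB e) (hreal : ∀ x : ℝ, e x ≠ 0)
    (hne : ∃ f : ℂ → ℂ, MemDB e f ∧ f ≠ 0)
    (β : ℝ) (hβ : β ∈ Set.Ico 0 Real.pi)
    (w : ℂ) (hw : sfun e β w = 0) :
    w.im = 0 ∧ deriv (sfun e β) w ≠ 0 :=
  statement7_general e he hreal β w hw
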